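/- Let G be a strongly connected directed simple graph on a finite vertex type V with distinguished vertex r : V. Let G' be the directed simple graph on Option V with edge relation E' defined by: E' (some a) (some b) ↔ E a b; E' (some r) none and E' none (some r) hold (the exchange with the new vertex); and there are no other edges; take none as the distinguished vertex of G'. Then there exists A' ∈ Θ_{G'} with B_{G'}(A') (with distinguished vertex none) of full column rank if and only if there exists A ∈ Θ_G with B_G(A) (with distinguished vertex r) of full column rank. -/

import Mathlib

/-! `B_G(A)` is the matrix of `X ↦ A * X - X * A`, taken from matrices supported on `L` to their
entries at the non-edges of `G`, so full column rank says that no nonzero `X` supported on `L`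
satisfies `[A, X] ∈ Θ_G`. Passing from `G` to `G'` adds the non-edges `(none, b)` and `(a, none)`
for `a, b ≠ r`. Extending `A` by ones on the two new edges, the commutator entries there are
exactly the entries of `X` in the row and in the column of `r`, and these vanish for matrices
supported on `L`. Conversely, restricting `A' ∈ Θ_{G'}` to `V` keeps the commutator entries on
`V × V`, because `X` vanishes in the row and in the column of `none`. -/

open Matrix

attribute [local instance] Classical.propDecidable

variable {V : Type*}

/-- The parameter space `Θ_G` of a directed simple graph given by the edge
relation `E` (where `E j i` means there is an edge `j → i`): matrices whose
off-diagonal entry `(i,j)` vanishes unless `j → i` is an edge. -/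
def Theta (E : V → V → Prop) : Set (Matrix V V ℂ) :=
  {A | ∀ i j, i ≠ j → ¬ E j i → A i j = 0}

/-- The coefficient matrix `B_G(A)`: rows indexed by the non-edges
`(k,l)` (the zero positions of a generic element of `Θ_G`), columns indexed
by pairs `(i,j)` with `i ≠ j` avoiding the distinguished vertex `r`. -/
noncomputable def Bmat (E : V → V → Prop) (r : V) (A : Matrix V V ℂ) :
    Matrix {p : V × V // p.1 ≠ p.2 ∧ ¬ E p.2 p.1}
      {p : V × V // p.1 ≠ p.2 ∧ p.1 ≠ r ∧ p.2 ≠ r} ℂ :=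
  fun kl ij =>
    if ij.1.1 = kl.1.1 ∧ ij.1.2 = kl.1.2 then A kl.1.1 kl.1.1 - A kl.1.2 kl.1.2
    else if ij.1.1 = kl.1.1 then -A ij.1.2 kl.1.2
    else if ij.1.2 = kl.1.2 then A kl.1.1 ij.1.1
    else 0

/-- `B_G(A)` has full column rank `(|V|-1)(|V|-2)` for some `A ∈ Θ_G`. -/
def HasFullB [Fintype V] (E : V → V → Prop) (r : V) : Prop :=
  ∃ A ∈ Theta E, (Bmat E r A).rank = (Fintype.card V - 1) * (Fintype.card V - 2)

lemma Matrix.rank_eq_card_width_iff {m n K : Type*} [Fintype n] [Field K] (M : Matrix m n K) :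
    M.rank = Fintype.card n ↔ ∀ v, M *ᵥ v = 0 → v = 0 := by
  rw [← ker_mulVecLin_eq_bot_iff, LinearMap.ker_eq_bot, coe_mulVecLin, mulVec_injective_iff,
    linearIndependent_iff_card_eq_finrank_span, rank_eq_finrank_span_cols, Set.finrank, eq_comm]

lemma card_offRootPairs [Fintype V] (r : V) :
    Fintype.card {p : V × V // p.1 ≠ p.2 ∧ p.1 ≠ r ∧ p.2 ≠ r} =
      (Fintype.card V - 1) * (Fintype.card V - 2) := by
  classical
  have hpairs : (Finset.univ.filter fun p : V × V => p.1 ≠ p.2 ∧ p.1 ≠ r ∧ p.2 ≠ r) =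
      ({r}ᶜ : Finset V).offDiag := by
    ext ⟨i, j⟩
    simp only [Finset.mem_filter, Finset.mem_univ, true_and, Finset.mem_offDiag,
      Finset.mem_compl, Finset.mem_singleton]
    tauto
  rw [Fintype.card_subtype, hpairs, Finset.offDiag_card, Finset.card_compl,
    Finset.card_singleton, ← Nat.mul_sub_one, Nat.sub_sub]

def IsOffRootSupported {R : Type*} [Zero R] (r : V) (X : Matrix V V R) : Prop :=
  (∀ i, X i i = 0) ∧ (∀ j, X r j = 0) ∧ (∀ i, X i r = 0)

lemma IsOffRootSupported.apply_eq_zero {R : Type*} [Zero R] {r : V} {X : Matrix V V R}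
    (hX : IsOffRootSupported r X) {i j : V} (h : ¬(i ≠ j ∧ i ≠ r ∧ j ≠ r)) : X i j = 0 := by
  obtain ⟨hdiag, hrow, hcol⟩ := hX
  simp only [ne_eq, not_and_or, not_not] at h
  rcases h with rfl | rfl | rfl
  exacts [hdiag i, hrow j, hcol i]

lemma bmat_mulVec [Fintype V] (E : V → V → Prop) (r : V) (A : Matrix V V ℂ) {X : Matrix V V ℂ}
    (hX : IsOffRootSupported r X) (kl : {p : V × V // p.1 ≠ p.2 ∧ ¬ E p.2 p.1}) :
    (Bmat E r A *ᵥ fun ij => X ij.1.1 ij.1.2) kl = (A * X - X * A) kl.1.1 kl.1.2 := by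
  obtain ⟨⟨k, l⟩, hkl⟩ := kl
  have hsum : (Bmat E r A *ᵥ fun ij => X ij.1.1 ij.1.2) ⟨(k, l), hkl⟩ =
      ∑ p : V × V, ((if p.2 = l then A k p.1 * X p.1 p.2 else 0) -
        (if p.1 = k then X p.1 p.2 * A p.2 l else 0)) := by
    rw [← Fintype.sum_subtype_add_sum_subtype (fun p : V × V => p.1 ≠ p.2 ∧ p.1 ≠ r ∧ p.2 ≠ r),
      Fintype.sum_eq_zero (fun p : {p : V × V // ¬(p.1 ≠ p.2 ∧ p.1 ≠ r ∧ p.2 ≠ r)} => _)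
        fun p => by simp [hX.apply_eq_zero p.2], add_zero]
    refine Fintype.sum_congr _ _ fun ⟨⟨i, j⟩, _⟩ => ?_
    by_cases hi : i = k <;> by_cases hj : j = l <;> simp [Bmat, hi, hj] <;> ring
  rw [hsum, Finset.sum_sub_distrib, Fintype.sum_prod_type, Fintype.sum_prod_type_right]
  simp [Matrix.sub_apply, mul_apply]

def HasTrivialCommutatorKernel [Fintype V] (E : V → V → Prop) (r : V) (A : Matrix V V ℂ) : Prop :=
  ∀ X : Matrix V V ℂ, IsOffRootSupported r X →
    (∀ k l, k ≠ l → ¬ E l k → (A * X - X * A) k l = 0) → X = 0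

lemma bmat_rank_eq_iff [Fintype V] (E : V → V → Prop) (r : V) (A : Matrix V V ℂ) :
    (Bmat E r A).rank = (Fintype.card V - 1) * (Fintype.card V - 2) ↔
      HasTrivialCommutatorKernel E r A := by
  rw [← card_offRootPairs r, rank_eq_card_width_iff]
  constructor
  · intro hinj X hX hcomm
    have hv : (fun ij : {p : V × V // p.1 ≠ p.2 ∧ p.1 ≠ r ∧ p.2 ≠ r} => X ij.1.1 ij.1.2) = 0 :=
      hinj _ <| funext fun kl => (bmat_mulVec E r A hX kl).trans (hcomm _ _ kl.2.1 kl.2.2)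
    ext i j
    by_cases h : i ≠ j ∧ i ≠ r ∧ j ≠ r
    · exact congrFun hv ⟨(i, j), h⟩
    · exact hX.apply_eq_zero h
  · intro hker v hv
    let X : Matrix V V ℂ := of fun i j => if h : i ≠ j ∧ i ≠ r ∧ j ≠ r then v ⟨(i, j), h⟩ else 0
    have hX : IsOffRootSupported r X := ⟨by simp [X], by simp [X], by simp [X]⟩
    have hvX : v = fun ij => X ij.1.1 ij.1.2 := funext fun ij => by simp [X, ij.2]
    have hX0 : X = 0 := hker X hX fun k l hkl hE => by
      rw [← bmat_mulVec E r A hX ⟨(k, l), hkl, hE⟩, ← hvX, hv, Pi.zero_apply]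
    rw [hvX, hX0]
    rfl

lemma hasFullB_iff [Fintype V] (E : V → V → Prop) (r : V) :
    HasFullB E r ↔ ∃ A ∈ Theta E, HasTrivialCommutatorKernel E r A :=
  exists_congr fun A => and_congr_right fun _ => bmat_rank_eq_iff E r A

section Option

variable {R : Type*} [Ring R] [Fintype V] {A X : Matrix (Option V) (Option V) R}

lemma commutator_some_some (hrow : ∀ j, X none j = 0) (hcol : ∀ i, X i none = 0) (k l : V) :
    (A * X - X * A) (some k) (some l) =
      (A.submatrix some some * X.submatrix some some -
        X.submatrix some some * A.submatrix some some) k l := by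
  simp [Matrix.sub_apply, mul_apply, Fintype.sum_option, hrow, hcol]

lemma commutator_none_some {r : V} (hA : ∀ a, a ≠ r → A none (some a) = 0)
    (hrow : ∀ j, X none j = 0) (l : V) :
    (A * X - X * A) none (some l) = A none (some r) * X (some r) (some l) := by
  simp only [Matrix.sub_apply, mul_apply, Fintype.sum_option, hrow, mul_zero, zero_mul,
    Finset.sum_const_zero, zero_add, sub_zero]
  exact Fintype.sum_eq_single r fun a ha => by rw [hA a ha, zero_mul]

lemma commutator_some_none {r : V} (hA : ∀ b, b ≠ r → A (some b) none = 0)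
    (hcol : ∀ i, X i none = 0) (k : V) :
    (A * X - X * A) (some k) none = -(X (some k) (some r) * A (some r) none) := by
  simp only [Matrix.sub_apply, mul_apply, Fintype.sum_option, hcol, mul_zero, zero_mul,
    Finset.sum_const_zero, zero_add, zero_sub]
  exact congrArg _ <| Fintype.sum_eq_single r fun b hb => by rw [hA b hb, mul_zero]

end Option

def extendByZero (X : Matrix V V ℂ) : Matrix (Option V) (Option V) ℂ :=
  of fun i j => match i, j with
    | some a, some b => X a b
    | _, _ => 0

noncomputable def exchangeMatrix (r : V) (A : Matrix V V ℂ) : Matrix (Option V) (Option V) ℂ :=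
  of fun i j => match i, j with
    | some a, some b => A a b
    | some a, none => if a = r then 1 else 0
    | none, some b => if b = r then 1 else 0
    | none, none => 0

@[simp]
lemma exchangeMatrix_submatrix_some (r : V) (A : Matrix V V ℂ) :
    (exchangeMatrix r A).submatrix some some = A :=
  rfl

@[simp]
lemma exchangeMatrix_none_some (r : V) (A : Matrix V V ℂ) (b : V) :
    exchangeMatrix r A none (some b) = if b = r then 1 else 0 :=
  rfl

@[simp]
lemma exchangeMatrix_some_none (r : V) (A : Matrix V V ℂ) (a : V) :
    exchangeMatrix r A (some a) none = if a = r then 1 else 0 :=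
  rfl

section Exchange

variable {E : V → V → Prop} {r : V} {E' : Option V → Option V → Prop}

lemma submatrix_some_mem_theta (hE1 : ∀ a b, E' (some a) (some b) ↔ E a b)
    {A' : Matrix (Option V) (Option V) ℂ} (hA' : A' ∈ Theta E') :
    A'.submatrix some some ∈ Theta E :=
  fun i j hij hE => hA' _ _ (fun h => hij (Option.some_injective _ h)) (by rwa [hE1])

lemma exchangeMatrix_mem_theta (hE1 : ∀ a b, E' (some a) (some b) ↔ E a b)
    (hE2 : ∀ a, E' (some a) none ↔ a = r) (hE3 : ∀ a, E' none (some a) ↔ a = r)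
    {A : Matrix V V ℂ} (hA : A ∈ Theta E) : exchangeMatrix r A ∈ Theta E' := by
  rintro (_ | a) (_ | b) hab hE
  · exact absurd rfl hab
  · exact if_neg fun hb => hE ((hE2 b).2 hb)
  · exact if_neg fun ha => hE ((hE3 a).2 ha)
  · exact hA a b (fun h => hab (congrArg some h)) (by rwa [hE1] at hE)

variable [Fintype V]

lemma HasTrivialCommutatorKernel.submatrix_some (hE1 : ∀ a b, E' (some a) (some b) ↔ E a b)
    (hE2 : ∀ a, E' (some a) none ↔ a = r) (hE3 : ∀ a, E' none (some a) ↔ a = r)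
    {A' : Matrix (Option V) (Option V) ℂ} (hA' : A' ∈ Theta E')
    (h : HasTrivialCommutatorKernel E' none A') :
    HasTrivialCommutatorKernel E r (A'.submatrix some some) := by
  intro X ⟨hdiag, hrow, hcol⟩ hcomm
  have hrow' : ∀ j, extendByZero X none j = 0 := fun _ => rfl
  have hcol' : ∀ i, extendByZero X i none = 0 := fun i => by cases i <;> rfl
  have hX' : IsOffRootSupported none (extendByZero X) :=
    ⟨fun i => by cases i; exacts [rfl, hdiag _], hrow', hcol'⟩
  have hX'0 : extendByZero X = 0 := h _ hX' <| by
    rintro (_ | k) (_ | l) hkl hE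
    · exact absurd rfl hkl
    · rw [commutator_none_some (r := r)
        (fun a ha => hA' _ _ (by simp) fun h => ha ((hE2 a).1 h)) hrow']
      exact mul_eq_zero_of_right _ (hrow l)
    · rw [commutator_some_none (r := r)
        (fun b hb => hA' _ _ (by simp) fun h => hb ((hE3 b).1 h)) hcol']
      exact neg_eq_zero.2 (mul_eq_zero_of_left (hcol k) _)
    · rw [commutator_some_some hrow' hcol']
      exact hcomm k l (by simpa using hkl) (by rwa [hE1] at hE)
  ext i j
  exact congrFun (congrFun hX'0 (some i)) (some j)

lemma HasTrivialCommutatorKernel.exchangeMatrix (hE1 : ∀ a b, E' (some a) (some b) ↔ E a b)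
    (hE2 : ∀ a, E' (some a) none ↔ a = r) (hE3 : ∀ a, E' none (some a) ↔ a = r)
    {A : Matrix V V ℂ} (h : HasTrivialCommutatorKernel E r A) :
    HasTrivialCommutatorKernel E' none (exchangeMatrix r A) := by
  intro X ⟨hdiag, hrow, hcol⟩ hcomm
  have hrow_r : ∀ b, X (some r) (some b) = 0 := by
    intro b
    by_cases hb : b = r
    · exact hb ▸ hdiag _
    · have := hcomm none (some b) (by simp) fun h => hb ((hE2 b).1 h)
      rwa [commutator_none_some (r := r) (fun a ha => by simp [ha]) hrow,
        exchangeMatrix_none_some, if_pos rfl, one_mul] at this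
  have hcol_r : ∀ a, X (some a) (some r) = 0 := by
    intro a
    by_cases ha : a = r
    · exact ha ▸ hdiag _
    · have := hcomm (some a) none (by simp) fun h => ha ((hE3 a).1 h)
      rwa [commutator_some_none (r := r) (fun b hb => by simp [hb]) hcol,
        exchangeMatrix_some_none, if_pos rfl, mul_one, neg_eq_zero] at this
  have hX0 : X.submatrix some some = 0 :=
    h _ ⟨fun i => hdiag _, hrow_r, hcol_r⟩ fun k l hkl hE => by
      simpa [commutator_some_some hrow hcol] using
        hcomm (some k) (some l) (by simpa using hkl) (by rwa [hE1])
  ext (_ | i) (_ | j)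
  exacts [hrow _, hrow _, hcol _, congrFun (congrFun hX0 i) j]

end Exchange

theorem add_exchange_fullB_iff_general [Fintype V]
    (E : V → V → Prop) (r : V)
    (E' : Option V → Option V → Prop)
    (hE1 : ∀ a b, E' (some a) (some b) ↔ E a b)
    (hE2 : ∀ a, E' (some a) none ↔ a = r)
    (hE3 : ∀ a, E' none (some a) ↔ a = r) :
    HasFullB E' none ↔ HasFullB E r := by
  rw [hasFullB_iff, hasFullB_iff]
  constructor
  · rintro ⟨A', hA', h⟩
    exact ⟨_, submatrix_some_mem_theta hE1 hA', h.submatrix_some hE1 hE2 hE3 hA'⟩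
  · rintro ⟨A, hA, h⟩
    exact ⟨_, exchangeMatrix_mem_theta hE1 hE2 hE3 hA, h.exchangeMatrix hE1 hE2 hE3⟩

/-- **adding an exchange.** Let `G` be a strongly connected
directed simple graph on a finite vertex type `V` with distinguished vertex
`r`, and let `G'` on `Option V` be obtained from `G` by adding a new vertex
(`none`) joined to `r` by a two-cycle, with `none` as new distinguished
vertex. Then `G'` admits a parameter matrix with `B` of full column rank if
and only if `G` does. -/
theorem add_exchange_fullB_iff [Fintype V] [DecidableEq V]
    (E : V → V → Prop) (hirr : ∀ u, ¬ E u u)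
    (hsc : ∀ u w : V, Relation.ReflTransGen E u w) (r : V)
    (E' : Option V → Option V → Prop)
    (hE1 : ∀ a b, E' (some a) (some b) ↔ E a b)
    (hE2 : ∀ a, E' (some a) none ↔ a = r)
    (hE3 : ∀ a, E' none (some a) ↔ a = r)
    (hE4 : ¬ E' none none) :
    HasFullB E' none ↔ HasFullB E r :=
  add_exchange_fullB_iff_general E r E' hE1 hE2 hE3
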